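/- Under the acceptance process on a draft tree with edge probabilities p(v) and ∑_{children of u} p(v) ≤ 1 at every node, the expected acceptance depth (depth of the stopping node) equals ∑_{v ≠ root} p̂(v). -/
import Mathlib


/-- Nodes as lists (paths from the root, head = deepest token); root = `[]`;
`depth u = u.length`; the children of `u` in the tree `T` are the `w ∈ T` with
`w ≠ []` and `w.tail = u`. `phat p v` = product of edge probabilities along the
root-to-`v` path, `phat p [] = 1`. -/
def phat (p : List ℕ → ℝ) : List ℕ → ℝ
  | [] => 1
  | a :: t => p (a :: t) * phat p t

/-- under the branch-acceptance process (stopping at node `u` with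
probability `phat u · (1 − ∑_{w child of u} p w)`), the expected depth of the stopping
node equals `∑_{v ≠ root} phat v`. -/
theorem opt_tree_expected_stopping_depth (p : List ℕ → ℝ)
    (T : Finset (List ℕ)) (hroot : [] ∈ T)
    (hclosed : ∀ v ∈ T, v ≠ [] → v.tail ∈ T)
    (hp : ∀ v ∈ T, v ≠ [] → 0 ≤ p v ∧ p v ≤ 1)
    (hsum : ∀ u ∈ T, ∑ w ∈ T.filter (fun w => w ≠ [] ∧ w.tail = u), p w ≤ 1) :
    ∑ u ∈ T, (u.length : ℝ) *
        (phat p u * (1 - ∑ w ∈ T.filter (fun w => w ≠ [] ∧ w.tail = u), p w)) =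
      ∑ v ∈ T.filter (· ≠ []), phat p v := by
  have step1 : ∑ u ∈ T, (u.length : ℝ) *
        (phat p u * (1 - ∑ w ∈ T.filter (fun w => w ≠ [] ∧ w.tail = u), p w)) =
      ∑ u ∈ T, ((u.length : ℝ) * phat p u
        - ∑ w ∈ T.filter (fun w => w ≠ [] ∧ w.tail = u),
            ((w.tail.length : ℝ) * phat p w.tail * p w)) := by
    refine Finset.sum_congr rfl fun u hu => ?_
    have : ∑ w ∈ T.filter (fun w => w ≠ [] ∧ w.tail = u),
            ((w.tail.length : ℝ) * phat p w.tail * p w)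
        = ∑ w ∈ T.filter (fun w => w ≠ [] ∧ w.tail = u),
            ((u.length : ℝ) * phat p u * p w) := by
      refine Finset.sum_congr rfl fun w hw => ?_
      have hw' := (Finset.mem_filter.mp hw).2
      rw [hw'.2]
    rw [this, ← Finset.mul_sum]
    ring
  rw [step1, Finset.sum_sub_distrib]
  have step2 : ∑ u ∈ T, ∑ w ∈ T.filter (fun w => w ≠ [] ∧ w.tail = u),
        ((w.tail.length : ℝ) * phat p w.tail * p w)
      = ∑ w ∈ T.filter (· ≠ []), ((w.tail.length : ℝ) * phat p w.tail * p w) := by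
    have hmaps : ∀ w ∈ T.filter (· ≠ []), w.tail ∈ T := by
      intro w hw
      obtain ⟨hwT, hwne⟩ := Finset.mem_filter.mp hw
      exact hclosed w hwT hwne
    have := Finset.sum_fiberwise_of_maps_to hmaps
      (fun w => (w.tail.length : ℝ) * phat p w.tail * p w)
    rw [← this]
    refine Finset.sum_congr rfl fun u hu => ?_
    congr 1
    rw [Finset.filter_filter]
  rw [step2]
  have step3 : ∑ w ∈ T.filter (· ≠ []), ((w.tail.length : ℝ) * phat p w.tail * p w)
      = ∑ w ∈ T.filter (· ≠ []), (((w.length : ℝ) - 1) * phat p w) := by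
    refine Finset.sum_congr rfl fun w hw => ?_
    obtain ⟨hwT, hwne⟩ := Finset.mem_filter.mp hw
    obtain ⟨a, t, rfl⟩ : ∃ a t, w = a :: t := by
      cases w with
      | nil => exact absurd rfl hwne
      | cons a t => exact ⟨a, t, rfl⟩
    simp [phat, List.length_cons]
    push_cast
    ring
  rw [step3]
  have step4 : ∑ u ∈ T, (u.length : ℝ) * phat p u
      = ∑ u ∈ T.filter (· ≠ []), (u.length : ℝ) * phat p u := by
    rw [← Finset.sum_filter_add_sum_filter_not T (· ≠ [])]
    have : ∑ u ∈ T.filter (fun u => ¬ u ≠ []), (u.length : ℝ) * phat p u = 0 := by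
      refine Finset.sum_eq_zero fun u hu => ?_
      obtain ⟨_, hu2⟩ := Finset.mem_filter.mp hu
      simp at hu2
      subst hu2
      simp
    rw [this, add_zero]
  rw [step4, ← Finset.sum_sub_distrib]
  refine Finset.sum_congr rfl fun u hu => ?_
  ring
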